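/- Let T be a set of universal first-order L-sentences and suppose that the set Int^T(X) of interpretations of L on X satisfying every sentence of T is nonempty. Then for every M ∈ Int^T(X) there exists a minimal element N of (Int^T(X), ⊆) with N ⊆ M, and every such minimal element N is a reversible interpretation. -/

import Mathlib

open FirstOrder

/-- An interpretation of the relational language `L` on the set `X`: an assignment of an
`n`-ary relation on `X` to each `n`-ary relation symbol of `L`. -/
def Interp (L : FirstOrder.Language) (X : Type*) : Type _ :=
  ∀ n : ℕ, L.Relations n → Set (Fin n → X)

namespace Interp

variable {L : FirstOrder.Language} {X : Type*}

/-- The `L`-structure with universe `X` determined by an interpretation. -/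
def str [L.IsRelational] (ρ : Interp L X) : L.Structure X where
  funMap := fun {_} f _ => isEmptyElim f
  RelMap := fun {n} r x => x ∈ ρ n r

/-- `ρ` satisfies the `L`-sentence `φ` (as a structure with universe `X`). -/
def Models [L.IsRelational] (ρ : Interp L X) (φ : L.Sentence) : Prop :=
  @FirstOrder.Language.Sentence.Realize L X ρ.str φ

/-- `ρ ⊆ σ`: every relation of `ρ` is contained in the corresponding relation of `σ`. -/
def le (ρ σ : Interp L X) : Prop := ∀ n (r : L.Relations n), ρ n r ⊆ σ n r

/-- The image `g[ρ]` of an interpretation under a bijection `g` of `X`: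
`r(x)` holds in `g[ρ]` iff `r(g⁻¹ ∘ x)` holds in `ρ`. -/
def img (g : X ≃ X) (ρ : Interp L X) : Interp L X :=
  fun n r => {x | (fun k => g.symm (x k)) ∈ ρ n r}

/-- A set of interpretations is isomorphism-invariant iff it is closed under
images by bijections of `X`. -/
def IsoInvariant (C : Set (Interp L X)) : Prop :=
  ∀ ρ ∈ C, ∀ g : X ≃ X, img g ρ ∈ C

/-- An interpretation is reversible iff every bijective homomorphism from it to itself
is an automorphism. -/
def Reversible (ρ : Interp L X) : Prop :=
  ∀ f : X ≃ X,
    (∀ n (r : L.Relations n), ∀ x ∈ ρ n r, (fun k => f (x k)) ∈ ρ n r) →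
    ∀ n (r : L.Relations n), ∀ x : Fin n → X, x ∈ ρ n r ↔ (fun k => f (x k)) ∈ ρ n r

/-- `τ` is a maximal element of `C` with respect to `⊆`. -/
def MaxIn (C : Set (Interp L X)) (τ : Interp L X) : Prop :=
  τ ∈ C ∧ ¬∃ σ ∈ C, le τ σ ∧ τ ≠ σ

/-- `τ` is a minimal element of `C` with respect to `⊆`. -/
def MinIn (C : Set (Interp L X)) (τ : Interp L X) : Prop :=
  τ ∈ C ∧ ¬∃ σ ∈ C, le σ τ ∧ σ ≠ τ

end Interp

/-- The set `Int^T(X)` of all interpretations of `L` on `X` satisfying every sentence of `T`. -/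
def IntT (L : FirstOrder.Language) [L.IsRelational] (X : Type*) (T : L.Theory) :
    Set (Interp L X) :=
  {ρ | ∀ φ ∈ T, ρ.Models φ}

/-- A first-order sentence is universal iff it is of the form `∀ v₁ … ∀ v_k, ψ`
with `ψ` quantifier-free. -/
def IsUniversalSentence {L : FirstOrder.Language} (φ : L.Sentence) : Prop :=
  ∃ (k : ℕ) (ψ : L.BoundedFormula Empty k), ψ.IsQF ∧ φ = ψ.alls

/-!
Universal sentences are preserved by intersections of nonempty chains: under a fixed assignment,
a quantifier-free formula depends on finitely many atomic facts, each of which is decided the same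
way in the intersection as in all sufficiently small members of the chain. Zorn's lemma then gives
minimal models below any model. A minimal element `N` of an isomorphism-invariant class is
reversible: if a bijection `f` maps `N` into itself, then `f[N] ⊆ N` lies in the class, so
`f[N] = N` by minimality, i.e. `f` is an automorphism.
-/

open FirstOrder FirstOrder.Language Filter OrderDual

namespace Interp

variable {L : Language} {X : Type*}

instance : PartialOrder (Interp L X) :=
  inferInstanceAs (PartialOrder (∀ n : ℕ, L.Relations n → Set (Fin n → X)))

instance : InfSet (Interp L X) := ⟨fun c n r => ⋂ σ ∈ c, σ n r⟩

theorem mem_sInf {c : Set (Interp L X)} {n : ℕ} {r : L.Relations n} {x : Fin n → X} :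
    x ∈ sInf c n r ↔ ∀ σ ∈ c, x ∈ σ n r :=
  Set.mem_iInter₂

theorem sInf_le {c : Set (Interp L X)} {σ : Interp L X} (hσ : σ ∈ c) : sInf c ≤ σ :=
  fun _ _ _ hx => mem_sInf.1 hx σ hσ

theorem minIn_iff_minimal {C : Set (Interp L X)} {N : Interp L X} :
    MinIn C N ↔ Minimal (· ∈ C) N := by
  refine and_congr_right fun _ => ?_
  push Not
  exact forall₂_congr fun σ _ => ⟨fun h hσ => (h hσ).ge, fun h hσ => le_antisymm hσ (h hσ)⟩

theorem exists_minIn_le {C : Set (Interp L X)}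
    (hC : ∀ c ⊆ C, IsChain (· ≤ ·) c → c.Nonempty → sInf c ∈ C) {M : Interp L X} (hM : M ∈ C) :
    ∃ N, MinIn C N ∧ N.le M := by
  -- Zorn's lemma in the dual order, where the intersection of a chain is an upper bound.
  have hZorn := zorn_le_nonempty₀ (ofDual ⁻¹' C) (fun c hcC hc σ hσ => ?_) (toDual M) hM
  · obtain ⟨N, hNM, hN⟩ := hZorn
    exact ⟨ofDual N, minIn_iff_minimal.2 hN.of_dual, hNM⟩
  · refine ⟨toDual (sInf (ofDual '' c)), hC _ ?_ ?_ ⟨_, σ, hσ, rfl⟩,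
      fun τ hτ => sInf_le ⟨τ, hτ, rfl⟩⟩
    · rintro _ ⟨τ, hτ, rfl⟩
      exact hcC hτ
    exact hc.symm.image_of_map_rel _ _ ofDual fun _ _ h => h

theorem comp_mem_img_iff (g : X ≃ X) (ρ : Interp L X) {n : ℕ} {r : L.Relations n}
    {x : Fin n → X} : (fun k => g (x k)) ∈ img g ρ n r ↔ x ∈ ρ n r := by
  simp [img]

theorem img_le_of_hom {f : X ≃ X} {ρ : Interp L X}
    (hf : ∀ n (r : L.Relations n), ∀ x ∈ ρ n r, (fun k => f (x k)) ∈ ρ n r) : img f ρ ≤ ρ :=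
  fun n r z hz => by simpa [img] using hf n r _ hz

theorem IsoInvariant.reversible_of_minIn {C : Set (Interp L X)} (hC : IsoInvariant C)
    {N : Interp L X} (hN : MinIn C N) : Reversible N := by
  intro f hf n r x
  have hfix : img f N = N := by
    by_contra hne
    exact hN.2 ⟨img f N, hC N hN.1 f, img_le_of_hom hf, hne⟩
  refine ⟨hf n r x, fun h => ?_⟩
  rwa [← comp_mem_img_iff f, hfix]

variable [L.IsRelational]

def imgEquiv (g : X ≃ X) (ρ : Interp L X) : @Language.Equiv L X X ρ.str (img g ρ).str :=
  @Language.Equiv.mk L X X ρ.str (img g ρ).str g (fun f => isEmptyElim f)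
    (fun _ _ => comp_mem_img_iff g ρ)

theorem models_img (g : X ≃ X) (ρ : Interp L X) (φ : L.Sentence) :
    (img g ρ).Models φ ↔ ρ.Models φ :=
  (@StrongHomClass.realize_sentence L X X ρ.str (img g ρ).str _ _ _ (imgEquiv g ρ) φ).symm

theorem isoInvariant_intT (T : L.Theory) : IsoInvariant (IntT L X T) :=
  fun ρ hρ g φ hφ => (models_img g ρ φ).2 (hρ φ hφ)

theorem term_realize_str_eq (ρ σ : Interp L X) {α : Type*} (t : L.Term α) (v : α → X) :
    @Term.realize L X ρ.str α v t = @Term.realize L X σ.str α v t := by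
  cases t with
  | var a => rfl
  | func f ts => exact isEmptyElim f

theorem eventually_realize_iff_realize_sInf (c : Set (Interp L X)) {α : Type*} {k : ℕ}
    {ψ : L.BoundedFormula α k} (hψ : ψ.IsQF) (v : α → X) (xs : Fin k → X) :
    ∀ᶠ σ : c in atBot, (@BoundedFormula.Realize L X (σ : Interp L X).str α k ψ v xs ↔
      @BoundedFormula.Realize L X (sInf c).str α k ψ v xs) := by
  induction hψ with
  | falsum => exact .of_forall fun _ => Iff.rfl
  | of_isAtomic h =>
    cases h with
    | equal t₁ t₂ =>
      refine .of_forall fun σ => ?_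
      change _ = _ ↔ _ = _
      rw [term_realize_str_eq σ (sInf c) t₁, term_realize_str_eq σ (sInf c) t₂]
    | @rel n R ts =>
      change ∀ᶠ σ : c in atBot,
        (fun i => _) ∈ (σ : Interp L X) n R ↔ (fun i => _) ∈ sInf c n R
      simp only [term_realize_str_eq _ (sInf c)]
      set y : Fin n → X := fun i => @Term.realize L X (sInf c).str _ (Sum.elim v xs) (ts i)
      by_cases hy : y ∈ sInf c n R
      · exact .of_forall fun σ => iff_of_true (mem_sInf.1 hy σ σ.2) hy
      · obtain ⟨σ₁, hσ₁, hyσ₁⟩ : ∃ σ₁ ∈ c, y ∉ σ₁ n R := by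
          simpa [mem_sInf] using hy
        filter_upwards [eventually_le_atBot (⟨σ₁, hσ₁⟩ : c)] with σ hσ
        exact iff_of_false (fun h => hyσ₁ (hσ n R h)) hy
  | imp _ _ ih₁ ih₂ => exact (ih₁.and ih₂).mono fun _ h => imp_congr h.1 h.2

theorem models_alls (ρ : Interp L X) {k : ℕ} (ψ : L.BoundedFormula Empty k) :
    ρ.Models ψ.alls ↔
      ∀ xs : Fin k → X, @BoundedFormula.Realize L X ρ.str Empty k ψ default xs :=
  letI := ρ.str
  BoundedFormula.realize_alls

theorem sInf_mem_intT_of_isChain {T : L.Theory} (hT : ∀ φ ∈ T, IsUniversalSentence φ)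
    {c : Set (Interp L X)} (hc : IsChain (· ≤ ·) c) (hne : c.Nonempty) (hcT : c ⊆ IntT L X T) :
    sInf c ∈ IntT L X T := by
  have : Nonempty c := hne.to_subtype
  have : IsCodirectedOrder c := ⟨fun a b => (hc.total a.2 b.2).elim
    (fun h => ⟨a, le_rfl, h⟩) (fun h => ⟨b, h, le_rfl⟩)⟩
  intro φ hφ
  obtain ⟨k, ψ, hψ, rfl⟩ := hT φ hφ
  refine (models_alls _ ψ).2 fun xs => ?_
  obtain ⟨σ, hσ⟩ := (eventually_realize_iff_realize_sInf c hψ default xs).exists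
  exact hσ.1 ((models_alls σ ψ).1 (hcT σ.2 _ hφ) xs)

end Interp

theorem stmt_6_general (L : FirstOrder.Language) [L.IsRelational] (X : Type*)
    (T : L.Theory) (hT : ∀ φ ∈ T, IsUniversalSentence φ) :
    (∀ M ∈ IntT L X T, ∃ N, Interp.MinIn (IntT L X T) N ∧ Interp.le N M) ∧
    (∀ N, Interp.MinIn (IntT L X T) N → Interp.Reversible N) :=
  ⟨fun _ hM => Interp.exists_minIn_le
      (fun _ hcT hc hne => Interp.sInf_mem_intT_of_isChain hT hc hne hcT) hM,
    fun _ hN => (Interp.isoInvariant_intT T).reversible_of_minIn hN⟩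

/-- If `T` is a set of universal first-order `L`-sentences and `Int^T(X)` is nonempty, then
below every member of `Int^T(X)` there is a minimal element of `(Int^T(X), ⊆)`, and every
minimal element of `Int^T(X)` is a reversible interpretation. -/
theorem stmt_6 (L : FirstOrder.Language) [L.IsRelational] (X : Type*) [Nonempty X]
    (T : L.Theory) (hT : ∀ φ ∈ T, IsUniversalSentence φ)
    (hne : (IntT L X T).Nonempty) :
    (∀ M ∈ IntT L X T, ∃ N, Interp.MinIn (IntT L X T) N ∧ Interp.le N M) ∧
    (∀ N, Interp.MinIn (IntT L X T) N → Interp.Reversible N) :=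
  stmt_6_general L X T hT
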